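/- arXiv:2110.12049 — 4 statements merged into one kernel-verified Lean document; each statement's English description precedes it below -/
import Mathlib

section
/- Let V be a real separable reflexive Banach space with continuous dual V*. Suppose T : V → V* is (i) monotone: ⟨T(u) − T(v), u − v⟩ ≥ 0 for all u, v ∈ V; (ii) coercive: ⟨T(v), v⟩/‖v‖ → ∞ as ‖v‖ → ∞; and (iii) demicontinuous: whenever v_k → v in the norm of V, ⟨T(v_k), u⟩ → ⟨T(v), u⟩ for every u ∈ V. Then T is surjective, i.e., for every f ∈ V* there exists u ∈ V with T(u) = f. If moreover T is strictly monotone, i.e., ⟨T(u) − T(v), u − v⟩ > 0 whenever u ≠ v, then T is also injective, hence bijective. -/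
open Filter Topology Module
open scoped RealInnerProductSpace

/-!
Galerkin method with vanishing regularisation. With `(wⱼ)` dense in `V` and
`Φₙ x = ∑_{j<n} xⱼ wⱼ`, the problem `⟨T (Φₙ x), Φₙ y⟩ + εₙ ⟪x, y⟫ = ⟨f, Φₙ y⟩` for all `y ∈ ℝⁿ`
is strongly monotone in `x`. Strongly monotone continuous maps of a Euclidean space are onto,
without Brouwer's theorem: by induction on the dimension, the solution on a hyperplane depends
continuously on the transverse coordinate, and the remaining scalar equation is solved by the
intermediate value theorem. Coercivity bounds the Galerkin solutions `uₙ = Φₙ xₙ`, the energy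
identity `⟨T uₙ, uₙ⟩ + εₙ ‖xₙ‖² = ⟨f, uₙ⟩` then forces `εₙ xₙ → 0`, so `T uₙ → f` on each `wⱼ`.
Reflexivity and Banach–Alaoglu give a weak cluster point `u₀`, and monotonicity passes to the limit as Minty's
inequality `⟨f - T v, u₀ - v⟩ ≥ 0`, first for `v ∈ span {wⱼ}`, then (Banach–Steinhaus) for
all `v`. Taking `v = u₀ + t z` with `t → 0⁺` gives `T u₀ = f`.
-/

theorem Continuous.surjective_of_mul_sq_le {h : ℝ → ℝ} (hh : Continuous h) {c : ℝ}
    (hc : 0 < c) (hmono : ∀ s t, c * (t - s) ^ 2 ≤ (h t - h s) * (t - s)) : Function.Surjective h := by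
  have hgrowth : ∀ s t, s ≤ t → h s + c * (t - s) ≤ h t := by
    intro s t hst
    rcases hst.eq_or_lt with rfl | hlt
    · simp
    · nlinarith [hmono s t]
  have hline : Tendsto (fun t => h 0 + c * t) atTop atTop :=
    tendsto_atTop_add_const_left _ _ (tendsto_id.const_mul_atTop hc)
  have hline' : Tendsto (fun t => h 0 + c * t) atBot atBot :=
    tendsto_atBot_add_const_left _ _ (tendsto_id.const_mul_atBot hc)
  refine hh.surjective (tendsto_atTop_mono' _ ?_ hline) (tendsto_atBot_mono' _ ?_ hline')
  · filter_upwards [eventually_ge_atTop 0] with t ht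
    simpa using hgrowth 0 t ht
  · filter_upwards [eventually_le_atBot 0] with t ht
    have := hgrowth t 0 ht
    linarith

section StronglyMonotone

variable {E : Type*} [NormedAddCommGroup E] [InnerProductSpace ℝ E]

def StronglyMonotoneOn (c : ℝ) (F : E → E) (s : Set E) : Prop :=
  ∀ x ∈ s, ∀ y ∈ s, c * ‖x - y‖ ^ 2 ≤ ⟪F x - F y, x - y⟫

theorem continuous_of_forall_inner_eq_zero {K : Submodule ℝ E} {c : ℝ} (hc : 0 < c)
    {G : ℝ → E → E} (hG : ∀ x, Continuous (G · x))
    (hmono : ∀ t, StronglyMonotoneOn c (G t) K) {y : ℝ → E} (hyK : ∀ t, y t ∈ K)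
    (hy : ∀ t, ∀ k ∈ K, ⟪G t (y t), k⟫ = 0) :
    Continuous y := by
  have hstab : ∀ s t, c * ‖y t - y s‖ ≤ ‖G s (y s) - G t (y s)‖ := by
    intro s t
    have hΔ : y t - y s ∈ K := K.sub_mem (hyK t) (hyK s)
    have h : c * ‖y t - y s‖ ^ 2 ≤ ‖G s (y s) - G t (y s)‖ * ‖y t - y s‖ :=
      calc c * ‖y t - y s‖ ^ 2 ≤ ⟪G t (y t) - G t (y s), y t - y s⟫ :=
            hmono t _ (hyK t) _ (hyK s)
        _ = ⟪G s (y s) - G t (y s), y t - y s⟫ := by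
            rw [inner_sub_left, inner_sub_left, hy t _ hΔ, hy s _ hΔ]
        _ ≤ _ := real_inner_le_norm _ _
    rcases (norm_nonneg (y t - y s)).eq_or_lt with h0 | hpos
    · rw [← h0, mul_zero]; exact norm_nonneg _
    · nlinarith
  refine continuous_iff_continuousAt.2 fun s => tendsto_iff_norm_sub_tendsto_zero.2 ?_
  have hlim : Tendsto (fun t => ‖G s (y s) - G t (y s)‖ / c) (𝓝 s) (𝓝 0) := by
    simpa using
      (((continuous_const (y := G s (y s))).sub (hG (y s))).norm.div_const c).tendsto s
  refine squeeze_zero (fun _ => norm_nonneg _) (fun t => ?_) hlim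
  rw [le_div_iff₀ hc, mul_comm]
  exact hstab s t

theorem exists_forall_inner_eq_zero_sup_span {c : ℝ} (hc : 0 < c) {K : Submodule ℝ E} {e : E}
    (he : e ∈ Kᗮ) (he0 : e ≠ 0)
    (hK : ∀ G : E → E, Continuous G → StronglyMonotoneOn c G K →
      ∃ x ∈ K, ∀ k ∈ K, ⟪G x, k⟫ = 0)
    {F : E → E} (hF : Continuous F) (hmono : StronglyMonotoneOn c F ↑(K ⊔ ℝ ∙ e)) :
    ∃ x ∈ K ⊔ ℝ ∙ e, ∀ k ∈ K ⊔ ℝ ∙ e, ⟪F x, k⟫ = 0 := by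
  have hline : ∀ y ∈ K, ∀ t : ℝ, y + t • e ∈ K ⊔ ℝ ∙ e := fun y hy t =>
    Submodule.add_mem_sup hy (Submodule.smul_mem _ t (Submodule.mem_span_singleton_self e))
  have hshift : ∀ t : ℝ, StronglyMonotoneOn c (fun y => F (y + t • e)) K := by
    intro t y hy y' hy'
    simpa only [add_sub_add_right_eq_sub] using hmono _ (hline y hy t) _ (hline y' hy' t)
  choose y hyK hy using fun t : ℝ =>
    hK (fun z => F (z + t • e)) (hF.comp (continuous_add_const (t • e))) (hshift t)
  have hy_cont : Continuous y := continuous_of_forall_inner_eq_zero hc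
    (fun _ => hF.comp (continuous_const.add (continuous_id.smul continuous_const))) hshift hyK hy
  set x : ℝ → E := fun t => y t + t • e
  have hx : ∀ t, ∀ k ∈ K, ⟪F (x t), k⟫ = 0 := hy
  have hx_sub : ∀ s t, x t - x s = (y t - y s) + (t - s) • e := fun s t => by
    simp only [x, sub_smul]; abel
  have hΔ : ∀ s t, y t - y s ∈ K := fun s t => K.sub_mem (hyK t) (hyK s)
  have hperp : ∀ s t, ⟪y t - y s, e⟫ = 0 := fun s t =>
    Submodule.inner_right_of_mem_orthogonal (hΔ s t) he
  obtain ⟨t₀, ht₀⟩ : ∃ t, ⟪F (x t), e⟫ = 0 := by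
    refine Continuous.surjective_of_mul_sq_le
      ((hF.comp (hy_cont.add (continuous_id.smul continuous_const))).inner continuous_const)
      (c := c * ‖e‖ ^ 2) (by positivity) (fun s t => ?_) 0
    calc c * ‖e‖ ^ 2 * (t - s) ^ 2 = c * ‖(t - s) • e‖ ^ 2 := by
          rw [norm_smul, Real.norm_eq_abs, mul_pow, sq_abs]; ring
      _ ≤ c * ‖x t - x s‖ ^ 2 := by
          rw [hx_sub, norm_add_sq_real, real_inner_smul_right, hperp]
          nlinarith [norm_nonneg (y t - y s)]
      _ ≤ ⟪F (x t) - F (x s), x t - x s⟫ := hmono _ (hline _ (hyK t) t) _ (hline _ (hyK s) s)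
      _ = (⟪F (x t), e⟫ - ⟪F (x s), e⟫) * (t - s) := by
          rw [hx_sub, inner_add_right, inner_sub_left, hx t _ (hΔ s t), hx s _ (hΔ s t),
            real_inner_smul_right, inner_sub_left]
          ring
  refine ⟨x t₀, hline _ (hyK t₀) t₀, fun k hk => ?_⟩
  obtain ⟨a, ha, b, hb, rfl⟩ := Submodule.mem_sup.1 hk
  obtain ⟨r, rfl⟩ := Submodule.mem_span_singleton.1 hb
  rw [inner_add_right, hx t₀ a ha, real_inner_smul_right, ht₀, mul_zero, add_zero]

theorem StronglyMonotoneOn.exists_forall_inner_eq_zero {c : ℝ} {K : Submodule ℝ E}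
    [FiniteDimensional ℝ K] {F : E → E} (hmono : StronglyMonotoneOn c F K) (hc : 0 < c)
    (hF : Continuous F) : ∃ x ∈ K, ∀ k ∈ K, ⟪F x, k⟫ = 0 := by
  induction hn : finrank ℝ K generalizing K F with
  | zero =>
    rw [Submodule.finrank_eq_zero] at hn
    subst hn
    refine ⟨0, Submodule.zero_mem _, fun k hk => ?_⟩
    rw [(Submodule.mem_bot ℝ).1 hk, inner_zero_right]
  | succ n ih =>
    obtain ⟨e, heK, he0⟩ := Submodule.exists_mem_ne_zero_of_ne_bot (p := K)
      (fun h => by rw [h, finrank_bot] at hn; omega)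
    have hle : ℝ ∙ e ≤ K := (Submodule.span_singleton_le_iff_mem e K).2 heK
    set K' := (ℝ ∙ e)ᗮ ⊓ K
    have : FiniteDimensional ℝ K' := Submodule.finiteDimensional_of_le inf_le_right
    have hK' : finrank ℝ K' = n := Submodule.finrank_add_inf_finrank_orthogonal' hle
      (by rw [finrank_span_singleton he0, hn, add_comm])
    have he : e ∈ K'ᗮ := Submodule.orthogonal_le inf_le_left
      (Submodule.le_orthogonal_orthogonal _ (Submodule.mem_span_singleton_self e))
    have hsup : K' ⊔ ℝ ∙ e = K := by
      rw [sup_comm]; exact Submodule.sup_orthogonal_inf_of_hasOrthogonalProjection hle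
    rw [← hsup] at hmono ⊢
    exact exists_forall_inner_eq_zero_sup_span hc he he0
      (fun G hG hGmono => ih hGmono hG hK') hF hmono

theorem StronglyMonotoneOn.exists_eq_zero [FiniteDimensional ℝ E] {c : ℝ} (hc : 0 < c)
    {F : E → E} (hF : Continuous F) (hmono : StronglyMonotoneOn c F Set.univ) :
    ∃ x, F x = 0 := by
  obtain ⟨x, -, hx⟩ := StronglyMonotoneOn.exists_forall_inner_eq_zero (K := ⊤)
    (by simpa using hmono) hc hF
  exact ⟨x, inner_self_eq_zero.1 (hx _ Submodule.mem_top)⟩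

end StronglyMonotone

theorem tendsto_apply_apply_of_tendsto {𝕜 E F : Type*} [NontriviallyNormedField 𝕜]
    [NormedAddCommGroup E] [NormedSpace 𝕜 E] [CompleteSpace E] [NormedAddCommGroup F]
    [NormedSpace 𝕜 F] {g : ℕ → E →L[𝕜] F} {g₀ : E →L[𝕜] F}
    (hg : ∀ x, Tendsto (fun k => g k x) atTop (𝓝 (g₀ x))) {x : ℕ → E} {x₀ : E}
    (hx : Tendsto x atTop (𝓝 x₀)) : Tendsto (fun k => g k (x k)) atTop (𝓝 (g₀ x₀)) := by
  obtain ⟨M, hM⟩ := banach_steinhaus fun y => by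
    obtain ⟨C, hC⟩ := (hg y).norm.bddAbove_range
    exact ⟨C, fun k => hC ⟨k, rfl⟩⟩
  have hsmall : Tendsto (fun k => g k (x k - x₀)) atTop (𝓝 0) := by
    refine squeeze_zero_norm (fun k => ((g k).le_opNorm _).trans
      (mul_le_mul_of_nonneg_right (hM k) (norm_nonneg _))) ?_
    simpa using (tendsto_iff_norm_sub_tendsto_zero.1 hx).const_mul M
  simpa using hsmall.add (hg x₀)

section MonotoneOperator

variable {V : Type*} [NormedAddCommGroup V] [NormedSpace ℝ V]

def Demicontinuous (T : V → StrongDual ℝ V) : Prop :=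
  ∀ (vk : ℕ → V) (v : V), Tendsto vk atTop (𝓝 v) →
    ∀ u : V, Tendsto (fun k => T (vk k) u) atTop (𝓝 (T v u))

theorem exists_norm_le_of_tendsto_div_norm {φ : V → ℝ}
    (hφ : Tendsto (fun v => φ v / ‖v‖) (comap norm atTop) atTop) (f : StrongDual ℝ V) :
    ∃ R, ∀ v, φ v ≤ f v → ‖v‖ ≤ R := by
  obtain ⟨R, hR⟩ := eventually_atTop.1 (eventually_comap.1 (hφ.eventually_gt_atTop ‖f‖))
  refine ⟨max R 0, fun v hv => le_of_not_gt fun hlt => ?_⟩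
  have hpos : 0 < ‖v‖ := (le_max_right R 0).trans_lt hlt
  have hgt := (lt_div_iff₀ hpos).1 (hR ‖v‖ ((le_max_left R 0).trans hlt.le) v rfl)
  linarith [le_of_abs_le (f.le_opNorm v)]

theorem exists_regularized_galerkin_solution {T : V → StrongDual ℝ V}
    (hmono : ∀ u v, 0 ≤ (T u - T v) (u - v)) (hdemi : Demicontinuous T)
    {E : Type*} [NormedAddCommGroup E] [InnerProductSpace ℝ E] [FiniteDimensional ℝ E]
    (Φ : E →L[ℝ] V) {ε : ℝ} (hε : 0 < ε) (f : StrongDual ℝ V) :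
    ∃ x : E, ∀ y : E, T (Φ x) (Φ y) + ε * ⟪x, y⟫ = f (Φ y) := by
  set F : E → E :=
    fun x => (InnerProductSpace.toDual ℝ E).symm ((T (Φ x) - f).comp Φ) + ε • x
  have hF : ∀ x y, ⟪F x, y⟫ = T (Φ x) (Φ y) - f (Φ y) + ε * ⟪x, y⟫ := fun x y => by
    simp only [F, inner_add_left, InnerProductSpace.toDual_symm_apply, real_inner_smul_left,
      ContinuousLinearMap.comp_apply, sub_apply]
  have hF_cont : Continuous F := by
    refine ((InnerProductSpace.toDual ℝ E).symm.continuous.comp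
      (continuous_clm_apply.2 fun y => ?_)).add (continuous_id.const_smul ε)
    refine continuous_iff_seqContinuous.2 fun xs x hxs => ?_
    simpa [Function.comp_def] using
      (hdemi _ _ ((Φ.continuous.tendsto x).comp hxs) (Φ y)).sub_const (f (Φ y))
  have hF_mono : StronglyMonotoneOn ε F Set.univ := by
    intro x _ y _
    have h := hmono (Φ x) (Φ y)
    rw [inner_sub_left, hF, hF, ← real_inner_self_eq_norm_sq]
    simp only [sub_apply, map_sub, inner_sub_left, inner_sub_right] at h ⊢
    nlinarith
  obtain ⟨x, hx⟩ := hF_mono.exists_eq_zero hε hF_cont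
  refine ⟨x, fun y => ?_⟩
  have h := hF x y
  rw [hx, inner_zero_left] at h
  linarith

theorem sub_apply_self_le {T : V → StrongDual ℝ V} (hmono : ∀ u v, 0 ≤ (T u - T v) (u - v))
    (f : StrongDual ℝ V) (u : V) : f u - T u u ≤ (‖f‖ + ‖T 0‖) * ‖u‖ := by
  have h := hmono u 0
  simp only [sub_zero, sub_apply] at h
  have hf := le_of_abs_le (f.le_opNorm u)
  have hT0 := neg_le_of_abs_le ((T 0).le_opNorm u)
  linarith

theorem norm_galerkin_residual_le {T : V → StrongDual ℝ V}
    (hmono : ∀ u v, 0 ≤ (T u - T v) (u - v))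
    {E : Type*} [NormedAddCommGroup E] [InnerProductSpace ℝ E] (Φ : E →L[ℝ] V)
    {ε : ℝ} (hε : 0 ≤ ε) {f : StrongDual ℝ V} {x : E}
    (hx : ∀ y, T (Φ x) (Φ y) + ε * ⟪x, y⟫ = f (Φ y)) (y : E) :
    ‖T (Φ x) (Φ y) - f (Φ y)‖ ≤ √(ε * ((‖f‖ + ‖T 0‖) * ‖Φ x‖)) * ‖y‖ := by
  have henergy : ε * ‖x‖ ^ 2 ≤ (‖f‖ + ‖T 0‖) * ‖Φ x‖ := by
    have h := hx x
    rw [real_inner_self_eq_norm_sq] at h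
    linarith [sub_apply_self_le hmono f (Φ x)]
  calc ‖T (Φ x) (Φ y) - f (Φ y)‖ = ε * |⟪x, y⟫| := by
        rw [← hx y, Real.norm_eq_abs, sub_add_cancel_left, abs_neg, abs_mul, abs_of_nonneg hε]
    _ ≤ ε * ‖x‖ * ‖y‖ := by
        rw [mul_assoc]; exact mul_le_mul_of_nonneg_left (abs_real_inner_le_norm x y) hε
    _ ≤ √(ε * ((‖f‖ + ‖T 0‖) * ‖Φ x‖)) * ‖y‖ := by
        refine mul_le_mul_of_nonneg_right (Real.le_sqrt_of_sq_le ?_) (norm_nonneg y)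
        calc (ε * ‖x‖) ^ 2 = ε * (ε * ‖x‖ ^ 2) := by ring
          _ ≤ _ := mul_le_mul_of_nonneg_left henergy hε

theorem exists_galerkin_sequence {T : V → StrongDual ℝ V}
    (hmono : ∀ u v, 0 ≤ (T u - T v) (u - v)) (hdemi : Demicontinuous T) (w : ℕ → V)
    (f : StrongDual ℝ V) {R : ℝ} (hR : ∀ v, T v v ≤ f v → ‖v‖ ≤ R) :
    ∃ u : ℕ → V, (∀ n, T (u n) (u n) ≤ f (u n)) ∧ (∀ n, ‖u n‖ ≤ R) ∧
      ∀ j, Tendsto (fun n => T (u n) (w j)) atTop (𝓝 (f (w j))) := by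
  set ε : ℕ → ℝ := fun n => 1 / ((n : ℝ) + 1)
  have hε : ∀ n, 0 < ε n := fun n => by positivity
  set Φ : ∀ n, EuclideanSpace ℝ (Fin n) →L[ℝ] V :=
    fun n => ∑ j : Fin n, (EuclideanSpace.proj j).smulRight (w j)
  have hΦ : ∀ n (j : Fin n), Φ n (EuclideanSpace.single j 1) = w j := by
    intro n j
    simp [Φ]
  choose x hx using fun n => exists_regularized_galerkin_solution hmono hdemi (Φ n) (hε n) f
  have hle : ∀ n, T (Φ n (x n)) (Φ n (x n)) ≤ f (Φ n (x n)) := fun n => by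
    have h := hx n (x n)
    rw [real_inner_self_eq_norm_sq] at h
    nlinarith [hε n, sq_nonneg ‖x n‖]
  have hbdd : ∀ n, ‖Φ n (x n)‖ ≤ R := fun n => hR _ (hle n)
  refine ⟨fun n => Φ n (x n), hle, hbdd, fun j => tendsto_iff_norm_sub_tendsto_zero.2 ?_⟩
  set C := ‖f‖ + ‖T 0‖
  have hres : ∀ n, j < n → ‖T (Φ n (x n)) (w j) - f (w j)‖ ≤ √(ε n * (C * R)) := by
    intro n hj
    have h := norm_galerkin_residual_le hmono (Φ n) (hε n).le (hx n)
      (EuclideanSpace.single ⟨j, hj⟩ 1)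
    rw [hΦ, PiLp.norm_single, norm_one, mul_one] at h
    refine h.trans (Real.sqrt_le_sqrt ?_)
    exact mul_le_mul_of_nonneg_left (mul_le_mul_of_nonneg_left (hbdd n) (by positivity))
      (hε n).le
  have hlim : Tendsto (fun n => √(ε n * (C * R))) atTop (𝓝 0) := by
    have h := (tendsto_one_div_add_atTop_nhds_zero_nat.mul_const (C * R)).sqrt
    rwa [zero_mul, Real.sqrt_zero] at h
  exact squeeze_zero' (Eventually.of_forall fun n => norm_nonneg _)
    ((eventually_gt_atTop j).mono hres) hlim

theorem tendsto_apply_of_mem_span {ι : Type*} {l : Filter ι} {g : ι → StrongDual ℝ V}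
    {f : StrongDual ℝ V} {s : Set V} (hs : ∀ v ∈ s, Tendsto (fun i => g i v) l (𝓝 (f v)))
    {v : V} (hv : v ∈ Submodule.span ℝ s) : Tendsto (fun i => g i v) l (𝓝 (f v)) := by
  induction hv using Submodule.span_induction with
  | mem v hv => exact hs v hv
  | zero => simpa using tendsto_const_nhds
  | add v v' _ _ hv hv' => simpa using hv.add hv'
  | smul a v _ hv => simpa using hv.const_mul a

theorem exists_ultrafilter_tendsto_apply
    (hrefl : Function.Surjective (NormedSpace.inclusionInDoubleDual ℝ V))
    {ι : Type*} (l : Filter ι) [l.NeBot] {u : ι → V} {R : ℝ} (hu : ∀ i, ‖u i‖ ≤ R) :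
    ∃ u₀ : V, ∃ U : Ultrafilter ι, ↑U ≤ l ∧
      ∀ g : StrongDual ℝ V, Tendsto (fun i => g (u i)) U (𝓝 (g u₀)) := by
  set J := NormedSpace.inclusionInDoubleDual ℝ V
  set U := Ultrafilter.of l
  obtain ⟨φ, -, hφ⟩ := (WeakDual.isCompact_closedBall (𝕜 := ℝ) 0 R).ultrafilter_le_nhds
    (U.map fun i => StrongDual.toWeakDual (J (u i))) (by
      refine le_principal_iff.2 (Ultrafilter.mem_map.2 (univ_mem' fun i => ?_))
      simpa using (NormedSpace.double_dual_bound ℝ V (u i)).trans (hu i))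
  obtain ⟨u₀, hu₀⟩ := hrefl (WeakDual.toStrongDual φ)
  refine ⟨u₀, U, Ultrafilter.of_le l, fun g => ?_⟩
  have h := ((WeakDual.eval_continuous g).tendsto φ).comp hφ
  rwa [show φ g = g u₀ from congrArg (fun ψ => ψ g) hu₀.symm] at h

theorem minty_inequality_of_tendsto {T : V → StrongDual ℝ V}
    (hmono : ∀ u v, 0 ≤ (T u - T v) (u - v)) {f : StrongDual ℝ V} {ι : Type*} {l : Filter ι}
    [l.NeBot] {u : ι → V} (hu : ∀ i, T (u i) (u i) ≤ f (u i)) {u₀ : V}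
    (hweak : ∀ g : StrongDual ℝ V, Tendsto (fun i => g (u i)) l (𝓝 (g u₀))) {v : V}
    (hv : Tendsto (fun i => T (u i) v) l (𝓝 (f v))) : 0 ≤ (f - T v) (u₀ - v) := by
  have hlim := (((hweak f).sub hv).sub (hweak (T v))).add_const (T v v)
  have hnonneg : ∀ i, 0 ≤ f (u i) - T (u i) v - T v (u i) + T v v := fun i => by
    have h := hmono (u i) v
    simp only [sub_apply, map_sub] at h
    linarith [hu i]
  have h := ge_of_tendsto' hlim hnonneg
  simp only [sub_apply, map_sub]
  linarith

theorem Demicontinuous.minty_inequality_of_dense [CompleteSpace V] {T : V → StrongDual ℝ V}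
    (hdemi : Demicontinuous T) {f : StrongDual ℝ V} {u₀ : V} {D : Set V} (hD : Dense D)
    (hminty : ∀ v ∈ D, 0 ≤ (f - T v) (u₀ - v)) (v : V) : 0 ≤ (f - T v) (u₀ - v) := by
  obtain ⟨d, hdD, hd⟩ := mem_closure_iff_seq_limit.1 (hD v)
  have hlim : Tendsto (fun k => (f - T (d k)) (u₀ - d k)) atTop (𝓝 ((f - T v) (u₀ - v))) :=
    tendsto_apply_apply_of_tendsto (fun z => (hdemi d v hd z).const_sub (f z))
      (tendsto_const_nhds.sub hd)
  exact ge_of_tendsto' hlim fun k => hminty _ (hdD k)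

theorem Demicontinuous.eq_of_minty_inequality {T : V → StrongDual ℝ V}
    (hdemi : Demicontinuous T) {f : StrongDual ℝ V} {u₀ : V}
    (hminty : ∀ v, 0 ≤ (f - T v) (u₀ - v)) : T u₀ = f := by
  have hle : ∀ z, f z ≤ T u₀ z := by
    intro z
    have ht : Tendsto (fun k : ℕ => u₀ + (1 / ((k : ℝ) + 1)) • z) atTop (𝓝 u₀) := by
      simpa using tendsto_const_nhds.add
        ((tendsto_one_div_add_atTop_nhds_zero_nat (𝕜 := ℝ)).smul_const z)
    refine ge_of_tendsto' (hdemi _ u₀ ht z) fun k => ?_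
    have h := hminty (u₀ + (1 / ((k : ℝ) + 1)) • z)
    rw [sub_add_cancel_left, map_neg, map_smul, smul_eq_mul, sub_apply] at h
    have htk : 0 < 1 / ((k : ℝ) + 1) := by positivity
    nlinarith
  ext z
  have h := hle (-z)
  simp only [map_neg, neg_le_neg_iff] at h
  exact le_antisymm h (hle z)

end MonotoneOperator

/-- **Minty–Browder theorem.** Let `V` be a real separable reflexive Banach space
(reflexivity is expressed as surjectivity of the canonical inclusion into the double dual)
and `T : V → V*` a monotone, coercive and demicontinuous operator. Then `T` is surjective,
and if `T` is strictly monotone it is moreover injective, hence bijective. -/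
theorem minty_browder
    (V : Type*) [NormedAddCommGroup V] [NormedSpace ℝ V] [CompleteSpace V]
    [TopologicalSpace.SeparableSpace V]
    (hrefl : Function.Surjective (NormedSpace.inclusionInDoubleDual ℝ V))
    (T : V → StrongDual ℝ V)
    (hmono : ∀ u v : V, 0 ≤ (T u - T v) (u - v))
    (hcoercive : Tendsto (fun v : V => T v v / ‖v‖) (Filter.comap norm atTop) atTop)
    (hdemi : ∀ (vk : ℕ → V) (v : V), Tendsto vk atTop (𝓝 v) →
      ∀ u : V, Tendsto (fun k => T (vk k) u) atTop (𝓝 (T v u))) :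
    Function.Surjective T ∧
      ((∀ u v : V, u ≠ v → 0 < (T u - T v) (u - v)) → Function.Bijective T) := by
  have hsurj : Function.Surjective T := by
    intro f
    obtain ⟨R, hR⟩ := exists_norm_le_of_tendsto_div_norm hcoercive f
    set w := TopologicalSpace.denseSeq V
    obtain ⟨u, hu_le, hu_bdd, hu_lim⟩ := exists_galerkin_sequence hmono hdemi w f hR
    obtain ⟨u₀, U, hU, hweak⟩ := exists_ultrafilter_tendsto_apply hrefl atTop hu_bdd
    have hspan : Dense (Submodule.span ℝ (Set.range w) : Set V) :=
      (TopologicalSpace.denseRange_denseSeq V).mono Submodule.subset_span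
    have hminty := Demicontinuous.minty_inequality_of_dense hdemi hspan fun v hv =>
      minty_inequality_of_tendsto hmono hu_le hweak
        ((tendsto_apply_of_mem_span (by rintro _ ⟨j, rfl⟩; exact hu_lim j) hv).mono_left hU)
    exact ⟨u₀, Demicontinuous.eq_of_minty_inequality hdemi hminty⟩
  refine ⟨hsurj, fun hstrict => ⟨fun u v huv => ?_, hsurj⟩⟩
  by_contra hne
  simpa [huv] using hstrict u v hne
end

section
/- Let E be a real normed vector space that is strictly convex as a normed space, i.e., for all x, y ∈ E with ‖x‖ = ‖y‖ = 1 and x ≠ y and all t ∈ (0,1), one has ‖t·x + (1−t)·y‖ < 1. Let 1 < p < ∞. Then the function x ↦ ‖x‖^p is strictly convex on E: for all x ≠ y and t ∈ (0,1), ‖t·x + (1−t)·y‖^p < t·‖x‖^p + (1−t)·‖y‖^p. -/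
open Set

/- If `‖x‖ ≠ ‖y‖`, strict convexity of `s ↦ s ^ p` on `[0, ∞)` already gives the strict
inequality after the triangle inequality. If `‖x‖ = ‖y‖ = r`, strict convexity of the space puts
`a • x + b • y` in the open ball of radius `r`, and `s ↦ s ^ p` is strictly increasing. -/

theorem strictConvexOn_norm_rpow {E : Type*} [NormedAddCommGroup E] [NormedSpace ℝ E]
    [StrictConvexSpace ℝ E] {p : ℝ} (hp : 1 < p) :
    StrictConvexOn ℝ univ fun x : E ↦ ‖x‖ ^ p := by
  refine ⟨convex_univ, fun x _ y _ hxy a b ha hb hab ↦ ?_⟩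
  simp only [smul_eq_mul]
  rcases eq_or_ne ‖x‖ ‖y‖ with hnorm | hnorm
  · calc ‖a • x + b • y‖ ^ p
        < ‖x‖ ^ p :=
          Real.rpow_lt_rpow (norm_nonneg _)
            (norm_combo_lt_of_ne le_rfl hnorm.ge hxy ha hb hab) (by linarith)
      _ = a * ‖x‖ ^ p + b * ‖y‖ ^ p := by rw [← hnorm, ← add_mul, hab, one_mul]
  · have htriangle : ‖a • x + b • y‖ ≤ a * ‖x‖ + b * ‖y‖ := by
      simpa only [norm_smul, Real.norm_of_nonneg ha.le, Real.norm_of_nonneg hb.le]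
        using norm_add_le (a • x) (b • y)
    calc ‖a • x + b • y‖ ^ p
        ≤ (a * ‖x‖ + b * ‖y‖) ^ p :=
          Real.rpow_le_rpow (norm_nonneg _) htriangle (by linarith)
      _ < a * ‖x‖ ^ p + b * ‖y‖ ^ p :=
          (strictConvexOn_rpow hp).2 (norm_nonneg x) (norm_nonneg y) hnorm ha hb hab

/-- In a strictly convex normed space, `x ↦ ‖x‖ ^ p` is strictly convex for `1 < p < ∞`. -/
theorem norm_rpow_strictConvex
    (E : Type*) [NormedAddCommGroup E] [NormedSpace ℝ E]
    (hsc : ∀ x y : E, ‖x‖ = 1 → ‖y‖ = 1 → x ≠ y → ∀ t : ℝ, t ∈ Ioo (0 : ℝ) 1 →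
      ‖t • x + (1 - t) • y‖ < 1)
    (p : ℝ) (hp : 1 < p) :
    ∀ x y : E, x ≠ y → ∀ t : ℝ, t ∈ Ioo (0 : ℝ) 1 →
      ‖t • x + (1 - t) • y‖ ^ p < t * ‖x‖ ^ p + (1 - t) * ‖y‖ ^ p := by
  intro x y hxy t ht
  have : StrictConvexSpace ℝ E := .of_norm_combo_lt_one fun x y hx hy hne ↦
    ⟨1 / 2, 1 - 1 / 2, add_sub_cancel _ _, hsc x y hx hy hne _ ⟨by norm_num, by norm_num⟩⟩
  exact (strictConvexOn_norm_rpow hp).2 (mem_univ x) (mem_univ y) hxy ht.1 (sub_pos.2 ht.2)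
    (add_sub_cancel _ _)
end

section
/- Let N ≥ 2 and 1 < p < ∞. Let H : ℝ^N → ℝ be a Finsler–Minkowski norm, i.e., H ≥ 0, H is C¹ on ℝ^N \ {0}, H(ξ) = 0 if and only if ξ = 0, H(tξ) = |t|·H(ξ) for all t ∈ ℝ and ξ ∈ ℝ^N, c₁·‖ξ‖ ≤ H(ξ) ≤ c₂·‖ξ‖ for some constants 0 < c₁ ≤ c₂ (‖·‖ the Euclidean norm), and H is strictly convex in the sense that for all x ≠ y with H(x) = H(y) = 1 and all t ∈ (0,1), H(t·x + (1−t)·y) < 1. Set F = H^p, let Ω ⊆ ℝ^N, let w : Ω → ℝ satisfy w(x) > 0 for all x ∈ Ω, and define A : Ω × ℝ^N → ℝ^N by A(x,ξ) = (1/p)·w(x)·∇F(ξ) for ξ ≠ 0 and A(x,0) = 0, where ∇F is the gradient of F with respect to the Euclidean inner product ⟨·,·⟩. Then there exist constants β > 0 and α > 0 such that for every x ∈ Ω: (H1) ‖A(x,ξ)‖ ≤ β·w(x)·‖ξ‖^{p−1} for all ξ; (H2) ⟨A(x,ξ), ξ⟩ ≥ α·w(x)·‖ξ‖^p for all ξ;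 (H3) ⟨A(x,ξ₁) − A(x,ξ₂), ξ₁ − ξ₂⟩ > 0 for all ξ₁ ≠ ξ₂; (H4) A(x,λξ) = λ·|λ|^{p−2}·A(x,ξ) for all λ ∈ ℝ \ {0} and all ξ. -/
open Set

set_option maxHeartbeats 1000000

/-- Let `H` be a Finsler–Minkowski norm on `ℝ^N`, `1 < p < ∞`, `F = H ^ p`, and
`A (x, ξ) = (1/p) * w x • ∇F ξ` (with `A (x, 0) = 0`) for a weight `w` positive on `Ω`.
Then `A` satisfies the structure conditions (H1)–(H4). -/
theorem finsler_operator_structure_conditions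
    (N : ℕ) (hN : 2 ≤ N) (p : ℝ) (hp : 1 < p)
    (H : EuclideanSpace ℝ (Fin N) → ℝ)
    (hHnonneg : ∀ ξ, 0 ≤ H ξ)
    (hHsmooth : ContDiffOn ℝ 1 H {(0 : EuclideanSpace ℝ (Fin N))}ᶜ)
    (hHzero : ∀ ξ, H ξ = 0 ↔ ξ = 0)
    (hHhom : ∀ (t : ℝ) (ξ : EuclideanSpace ℝ (Fin N)), H (t • ξ) = |t| * H ξ)
    (c₁ c₂ : ℝ) (hc₁ : 0 < c₁) (hc₁c₂ : c₁ ≤ c₂)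
    (hHbounds : ∀ ξ, c₁ * ‖ξ‖ ≤ H ξ ∧ H ξ ≤ c₂ * ‖ξ‖)
    (hHstrictconv : ∀ x y : EuclideanSpace ℝ (Fin N), x ≠ y → H x = 1 → H y = 1 →
      ∀ t : ℝ, t ∈ Ioo (0 : ℝ) 1 → H (t • x + (1 - t) • y) < 1)
    (F : EuclideanSpace ℝ (Fin N) → ℝ)
    (hF : ∀ ξ, F ξ = H ξ ^ p)
    (Ω : Set (EuclideanSpace ℝ (Fin N)))
    (w : EuclideanSpace ℝ (Fin N) → ℝ)
    (hw : ∀ x ∈ Ω, 0 < w x)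
    (A : EuclideanSpace ℝ (Fin N) → EuclideanSpace ℝ (Fin N) → EuclideanSpace ℝ (Fin N))
    (hA : ∀ x ∈ Ω, ∀ ξ : EuclideanSpace ℝ (Fin N), ξ ≠ 0 →
      A x ξ = ((1 / p) * w x) • gradient F ξ)
    (hA0 : ∀ x ∈ Ω, A x 0 = 0) :
    ∃ β : ℝ, 0 < β ∧ ∃ α : ℝ, 0 < α ∧ ∀ x ∈ Ω,
      (∀ ξ, ‖A x ξ‖ ≤ β * w x * ‖ξ‖ ^ (p - 1)) ∧
      (∀ ξ, α * w x * ‖ξ‖ ^ p ≤ inner ℝ (A x ξ) ξ) ∧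
      (∀ ξ₁ ξ₂ : EuclideanSpace ℝ (Fin N), ξ₁ ≠ ξ₂ →
        (0 : ℝ) < inner ℝ (A x ξ₁ - A x ξ₂) (ξ₁ - ξ₂)) ∧
      (∀ l : ℝ, l ≠ 0 → ∀ ξ, A x (l • ξ) = (l * |l| ^ (p - 2)) • A x ξ) := by
  have hp0 : (0 : ℝ) < p := zero_lt_one.trans hp
  have hFeq : F = fun ξ => H ξ ^ p := funext hF
  subst hFeq
  -- positivity of H off 0
  have hHpos : ∀ ξ : EuclideanSpace ℝ (Fin N), ξ ≠ 0 → 0 < H ξ := fun ξ hξ =>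
    lt_of_le_of_ne (hHnonneg ξ) (fun h => hξ ((hHzero ξ).mp h.symm))
  have hH0 : H 0 = 0 := (hHzero 0).2 rfl
  -- differentiability
  have hHdiff : ∀ ξ : EuclideanSpace ℝ (Fin N), ξ ≠ 0 → DifferentiableAt ℝ H ξ := fun ξ hξ =>
    ((hHsmooth ξ (by simpa using hξ)).contDiffAt
      (isOpen_compl_singleton.mem_nhds (by simpa using hξ))).differentiableAt one_ne_zero
  have hFdiff : ∀ ξ : EuclideanSpace ℝ (Fin N), ξ ≠ 0 →
      DifferentiableAt ℝ (fun y => H y ^ p) ξ := fun ξ hξ =>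
    (hHdiff ξ hξ).rpow_const (Or.inl (hHpos ξ hξ).ne')
  have hinner : ∀ ξ v : EuclideanSpace ℝ (Fin N), (inner ℝ (gradient (fun y => H y ^ p) ξ) v : ℝ)
      = fderiv ℝ (fun y => H y ^ p) ξ v := fun ξ v => InnerProductSpace.toDual_symm_apply
  -- Euler identity
  have hEuler : ∀ ξ : EuclideanSpace ℝ (Fin N), ξ ≠ 0 →
      fderiv ℝ (fun y => H y ^ p) ξ ξ = p * H ξ ^ p := by
    intro ξ hξ
    have hm : HasDerivAt (fun t : ℝ => t • ξ) ξ 1 := by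
      simpa using (hasDerivAt_id (1:ℝ)).smul_const ξ
    have h1 : HasDerivAt (fun t : ℝ => H (t • ξ) ^ p) (fderiv ℝ (fun y => H y ^ p) ξ ξ) 1 := by
      have := ((hFdiff ξ hξ).hasFDerivAt).comp_hasDerivAt_of_eq (1:ℝ) hm (one_smul ℝ ξ).symm
      exact this
    have h3 : HasDerivAt (fun t : ℝ => t ^ p * H ξ ^ p) (p * H ξ ^ p) 1 := by
      have := (Real.hasDerivAt_rpow_const (x := (1:ℝ)) (p := p)
        (Or.inl one_ne_zero)).mul_const (H ξ ^ p)
      simpa [Real.one_rpow] using this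
    have h2 : HasDerivAt (fun t : ℝ => H (t • ξ) ^ p) (p * H ξ ^ p) 1 := by
      refine h3.congr_of_eventuallyEq ?_
      filter_upwards [eventually_gt_nhds (zero_lt_one (α := ℝ))] with t ht
      rw [hHhom, Real.mul_rpow (abs_nonneg t) (hHnonneg ξ), abs_of_pos ht]
    exact h1.unique h2
  -- scaling of the gradient
  have hscale : ∀ ξ : EuclideanSpace ℝ (Fin N), ξ ≠ 0 → ∀ c : ℝ, c ≠ 0 →
      gradient (fun y => H y ^ p) (c • ξ)
        = (c * |c| ^ (p - 2)) • gradient (fun y => H y ^ p) ξ := by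
    intro ξ hξ c hc
    have hcs : c • ξ ≠ 0 := smul_ne_zero hc hξ
    set L := fderiv ℝ (fun y => H y ^ p) (c • ξ) with hL
    have hm : HasFDerivAt (fun y : EuclideanSpace ℝ (Fin N) => c • y)
        (c • ContinuousLinearMap.id ℝ (EuclideanSpace ℝ (Fin N))) ξ :=
      (c • ContinuousLinearMap.id ℝ (EuclideanSpace ℝ (Fin N))).hasFDerivAt
    have hLhs : HasFDerivAt (fun y : EuclideanSpace ℝ (Fin N) => H (c • y) ^ p)
        (L.comp (c • ContinuousLinearMap.id ℝ (EuclideanSpace ℝ (Fin N)))) ξ :=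
      HasFDerivAt.comp ξ ((hFdiff _ hcs).hasFDerivAt) hm
    have hRhs : HasFDerivAt (fun y : EuclideanSpace ℝ (Fin N) => H (c • y) ^ p)
        (|c| ^ p • fderiv ℝ (fun y => H y ^ p) ξ) ξ := by
      have heq : (fun y : EuclideanSpace ℝ (Fin N) => H (c • y) ^ p)
          = fun y => |c| ^ p * H y ^ p := by
        funext y
        rw [hHhom, Real.mul_rpow (abs_nonneg c) (hHnonneg y)]
      rw [heq]
      simpa [smul_eq_mul] using ((hFdiff ξ hξ).hasFDerivAt).const_mul (|c| ^ p)
    have hkey : L.comp (c • ContinuousLinearMap.id ℝ (EuclideanSpace ℝ (Fin N)))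
        = |c| ^ p • fderiv ℝ (fun y => H y ^ p) ξ := hLhs.unique hRhs
    have hkey2 : c • L = |c| ^ p • fderiv ℝ (fun y => H y ^ p) ξ := by
      rw [← hkey]; ext v; simp [ContinuousLinearMap.comp_apply, map_smul]
    have hLval : L = (c⁻¹ * |c| ^ p) • fderiv ℝ (fun y => H y ^ p) ξ := by
      rw [mul_smul, ← hkey2, ← smul_assoc, smul_eq_mul, inv_mul_cancel₀ hc, one_smul]
    have hcoef : c⁻¹ * |c| ^ p = c * |c| ^ (p - 2) := by
      have h2 : |c| ^ p = |c| ^ (p - 2) * |c| ^ (2 : ℝ) := by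
        rw [← Real.rpow_add (abs_pos.2 hc)]; ring_nf
      rw [h2, show ((2:ℝ)) = ((2:ℕ) : ℝ) by norm_num, Real.rpow_natCast, sq_abs]
      field_simp
    rw [gradient, hL] at *
    rw [hLval, hcoef, map_smul]
    rfl
  -- bound on the gradient
  obtain ⟨M, hM0, hMb⟩ : ∃ M : ℝ, 0 ≤ M ∧ ∀ ξ : EuclideanSpace ℝ (Fin N), ξ ≠ 0 →
      ‖gradient (fun y => H y ^ p) ξ‖ ≤ M * ‖ξ‖ ^ (p - 1) := by
    have hgradnorm : ∀ ξ : EuclideanSpace ℝ (Fin N),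
        ‖gradient (fun y => H y ^ p) ξ‖ = ‖fderiv ℝ (fun y => H y ^ p) ξ‖ := fun ξ =>
      LinearIsometryEquiv.norm_map _ _
    have hFc1 : ContDiffOn ℝ 1 (fun y => H y ^ p) {(0 : EuclideanSpace ℝ (Fin N))}ᶜ :=
      hHsmooth.rpow_const_of_ne (fun x hx => (hHpos x (by simpa using hx)).ne')
    have hfc : ContinuousOn (fderiv ℝ (fun y => H y ^ p)) {(0 : EuclideanSpace ℝ (Fin N))}ᶜ :=
      hFc1.continuousOn_fderiv_of_isOpen isOpen_compl_singleton le_rfl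
    have hsub : Metric.sphere (0 : EuclideanSpace ℝ (Fin N)) 1
        ⊆ {(0 : EuclideanSpace ℝ (Fin N))}ᶜ := by
      intro u hu
      simp only [mem_compl_iff, mem_singleton_iff]
      intro h
      rw [h] at hu
      simp at hu
    have hcomp : IsCompact ((fun u => ‖fderiv ℝ (fun y => H y ^ p) u‖) ''
        Metric.sphere (0 : EuclideanSpace ℝ (Fin N)) 1) := by
      refine (isCompact_sphere 0 1).image_of_continuousOn ?_
      exact (hfc.mono hsub).norm
    obtain ⟨M, hM⟩ := hcomp.bddAbove
    refine ⟨max M 0, le_max_right _ _, ?_⟩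
    intro ξ hξ
    have hnorm : (0:ℝ) < ‖ξ‖ := norm_pos_iff.2 hξ
    set u : EuclideanSpace ℝ (Fin N) := ‖ξ‖⁻¹ • ξ with hu
    have hu1 : ‖u‖ = 1 := by
      rw [hu, norm_smul, norm_inv, norm_norm, inv_mul_cancel₀ hnorm.ne']
    have hune : u ≠ 0 := fun h => by simp [h] at hu1
    have hξeq : ξ = ‖ξ‖ • u := by rw [hu, smul_smul, mul_inv_cancel₀ hnorm.ne', one_smul]
    have hsc := hscale u hune ‖ξ‖ hnorm.ne'
    have habs : |‖ξ‖ * |‖ξ‖| ^ (p - 2)| = ‖ξ‖ ^ (p - 1) := by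
      rw [abs_of_pos hnorm, abs_of_nonneg (by positivity),
        show p - 1 = (p - 2) + 1 by ring, Real.rpow_add_one hnorm.ne', mul_comm]
    have husp : u ∈ Metric.sphere (0 : EuclideanSpace ℝ (Fin N)) 1 :=
      mem_sphere_zero_iff_norm.2 hu1
    have hub : ‖gradient (fun y => H y ^ p) u‖ ≤ max M 0 :=
      (hgradnorm u).le.trans ((hM ⟨u, husp, rfl⟩).trans (le_max_left _ _))
    calc ‖gradient (fun y => H y ^ p) ξ‖
        = ‖gradient (fun y => H y ^ p) (‖ξ‖ • u)‖ := by rw [← hξeq]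
      _ = |‖ξ‖ * |‖ξ‖| ^ (p - 2)| * ‖gradient (fun y => H y ^ p) u‖ := by
          rw [hsc, norm_smul, Real.norm_eq_abs]
      _ = ‖ξ‖ ^ (p - 1) * ‖gradient (fun y => H y ^ p) u‖ := by rw [habs]
      _ ≤ ‖ξ‖ ^ (p - 1) * max M 0 := by
          exact mul_le_mul_of_nonneg_left hub (by positivity)
      _ = max M 0 * ‖ξ‖ ^ (p - 1) := mul_comm _ _
  -- convexity of H
  have hHconv : ConvexOn ℝ (univ : Set (EuclideanSpace ℝ (Fin N))) H := by
    refine ⟨convex_univ, ?_⟩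
    rintro x - y - s t hs ht hst
    rcases eq_or_lt_of_le hs with rfl | hs
    · simp only [zero_add] at hst
      subst hst
      simp
    rcases eq_or_lt_of_le ht with rfl | ht
    · simp only [add_zero] at hst
      subst hst
      simp
    by_cases hx0 : x = 0
    · subst hx0
      simp [hHhom, hH0, abs_of_pos ht, smul_eq_mul]
    by_cases hy0 : y = 0
    · subst hy0
      simp [hHhom, hH0, abs_of_pos hs, smul_eq_mul]
    set a := H x with ha
    set b := H y with hb
    have ha0 : 0 < a := hHpos x hx0
    have hb0 : 0 < b := hHpos y hy0
    set d := s * a + t * b with hd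
    have hd0 : 0 < d := by positivity
    set u : EuclideanSpace ℝ (Fin N) := a⁻¹ • x with hu
    set v : EuclideanSpace ℝ (Fin N) := b⁻¹ • y with hv
    have hHu : H u = 1 := by rw [hu, hHhom, abs_of_pos (by positivity), inv_mul_cancel₀ ha0.ne']
    have hHv : H v = 1 := by rw [hv, hHhom, abs_of_pos (by positivity), inv_mul_cancel₀ hb0.ne']
    set σ := s * a / d with hσ
    have hσ0 : 0 < σ := by positivity
    have hσ1 : σ < 1 := by
      rw [hσ, div_lt_one hd0, hd]
      nlinarith
    have hcomb : s • x + t • y = d • (σ • u + (1 - σ) • v) := by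
      have h1 : 1 - σ = t * b / d := by
        rw [hσ, hd]; field_simp; ring
      rw [h1, hu, hv, hσ]
      match_scalars <;> field_simp <;> ring
    have hkey : H (σ • u + (1 - σ) • v) ≤ 1 := by
      by_cases huv : u = v
      · rw [huv, ← add_smul, show σ + (1 - σ) = 1 by ring, one_smul, hHv]
      · exact (hHstrictconv u v huv hHu hHv σ ⟨hσ0, hσ1⟩).le
    calc H (s • x + t • y) = d * H (σ • u + (1 - σ) • v) := by
          rw [hcomb, hHhom, abs_of_pos hd0]
      _ ≤ d * 1 := mul_le_mul_of_nonneg_left hkey hd0.le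
      _ = s * a + t * b := by rw [mul_one]
      _ = s • H x + t • H y := by rw [ha, hb]; rfl
  -- strict midpoint convexity of F
  have hFmid : ∀ x y : EuclideanSpace ℝ (Fin N), x ≠ y →
      H ((1/2 : ℝ) • x + (1/2 : ℝ) • y) ^ p < H x ^ p / 2 + H y ^ p / 2 := by
    intro x y hxy
    by_cases hab : H x = H y
    · have hx0 : x ≠ 0 := by
        rintro rfl
        have h0 : H y = 0 := by rw [← hab, (hHzero 0).2 rfl]
        exact hxy ((hHzero y).1 h0).symm
      have ha0 : 0 < H x := hHpos x hx0
      set a := H x with ha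
      set u : EuclideanSpace ℝ (Fin N) := a⁻¹ • x with hu
      set v : EuclideanSpace ℝ (Fin N) := a⁻¹ • y with hv
      have hHu : H u = 1 := by rw [hu, hHhom, abs_of_pos (by positivity), inv_mul_cancel₀ ha0.ne']
      have hHv : H v = 1 := by
        rw [hv, hHhom, abs_of_pos (by positivity), ← hab, inv_mul_cancel₀ ha0.ne']
      have huv : u ≠ v := by
        rw [hu, hv]
        intro h
        exact hxy (smul_right_injective _ (inv_ne_zero ha0.ne') h)
      have hlt : H ((1/2 : ℝ) • u + (1 - (1/2 : ℝ)) • v) < 1 :=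
        hHstrictconv u v huv hHu hHv (1/2) ⟨by norm_num, by norm_num⟩
      have hmid : (1/2 : ℝ) • x + (1/2 : ℝ) • y = a • ((1/2 : ℝ) • u + (1 - (1/2 : ℝ)) • v) := by
        rw [hu, hv]
        match_scalars <;> field_simp <;> ring
      have hHm : H ((1/2 : ℝ) • x + (1/2 : ℝ) • y) < a := by
        rw [hmid, hHhom, abs_of_pos ha0]
        nlinarith
      calc H ((1/2 : ℝ) • x + (1/2 : ℝ) • y) ^ p < a ^ p :=
            Real.rpow_lt_rpow (hHnonneg _) hHm hp0
        _ = H x ^ p / 2 + H y ^ p / 2 := by rw [← hab, ← ha]; ring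
    · have hle : H ((1/2 : ℝ) • x + (1/2 : ℝ) • y) ≤ (1/2 : ℝ) * H x + (1/2 : ℝ) * H y := by
        have := hHconv.2 (mem_univ x) (mem_univ y) (by norm_num : (0:ℝ) ≤ 1/2)
          (by norm_num : (0:ℝ) ≤ 1/2) (by norm_num)
        simpa [smul_eq_mul] using this
      have hstep : ((1/2 : ℝ) * H x + (1/2 : ℝ) * H y) ^ p
          < (1/2 : ℝ) * H x ^ p + (1/2 : ℝ) * H y ^ p := by
        have := (strictConvexOn_rpow hp).2 (mem_Ici.2 (hHnonneg x)) (mem_Ici.2 (hHnonneg y))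
          hab (by norm_num : (0:ℝ) < 1/2) (by norm_num : (0:ℝ) < 1/2) (by norm_num)
        simpa [smul_eq_mul] using this
      calc H ((1/2 : ℝ) • x + (1/2 : ℝ) • y) ^ p
          ≤ ((1/2 : ℝ) * H x + (1/2 : ℝ) * H y) ^ p :=
            Real.rpow_le_rpow (hHnonneg _) hle hp0.le
        _ < (1/2 : ℝ) * H x ^ p + (1/2 : ℝ) * H y ^ p := hstep
        _ = H x ^ p / 2 + H y ^ p / 2 := by ring
  -- convexity of F
  have hFconv : ConvexOn ℝ (univ : Set (EuclideanSpace ℝ (Fin N))) (fun y => H y ^ p) := by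
    refine ⟨convex_univ, ?_⟩
    rintro x - y - s t hs ht hst
    have h1 : H (s • x + t • y) ^ p ≤ (s * H x + t * H y) ^ p := by
      refine Real.rpow_le_rpow (hHnonneg _) ?_ (by positivity)
      simpa [smul_eq_mul] using hHconv.2 (mem_univ x) (mem_univ y) hs ht hst
    have h2 : (s * H x + t * H y) ^ p ≤ s * H x ^ p + t * H y ^ p := by
      simpa [smul_eq_mul] using (convexOn_rpow hp.le).2 (mem_Ici.2 (hHnonneg x))
        (mem_Ici.2 (hHnonneg y)) hs ht hst
    simpa [smul_eq_mul] using h1.trans h2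
  -- subgradient strict inequality
  have hsub : ∀ a b : EuclideanSpace ℝ (Fin N), a ≠ 0 → a ≠ b →
      (inner ℝ (gradient (fun y => H y ^ p) a) (b - a) : ℝ) < H b ^ p - H a ^ p := by
    intro a b ha hab
    set g : ℝ → ℝ := fun t => H (t • (b - a) + a) ^ p with hg
    have hgconv : ConvexOn ℝ (univ : Set ℝ) g := by
      have := hFconv.comp_affineMap (AffineMap.lineMap a b)
      have hset : (AffineMap.lineMap a b) ⁻¹' univ = (univ : Set ℝ) := by simp
      rw [hset] at this
      have heq : g = (fun y => H y ^ p) ∘ (AffineMap.lineMap a b) := by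
        funext t
        simp [hg, Function.comp, AffineMap.lineMap_apply]
      rw [heq]
      exact this
    have hgd : HasDerivAt g ((inner ℝ (gradient (fun y => H y ^ p) a) (b - a) : ℝ)) 0 := by
      rw [hinner]
      have hm : HasDerivAt (fun t : ℝ => t • (b - a) + a) (b - a) 0 := by
        simpa using ((hasDerivAt_id (0:ℝ)).smul_const (b - a)).add_const a
      have := ((hFdiff a ha).hasFDerivAt).comp_hasDerivAt_of_eq (0:ℝ) hm
        (by simp : a = (0:ℝ) • (b - a) + a)
      exact this
    have hslope : (inner ℝ (gradient (fun y => H y ^ p) a) (b - a) : ℝ)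
        ≤ 2 * (g (1/2) - g 0) := by
      have := hgconv.le_slope_of_hasDerivAt (mem_univ (0:ℝ)) (mem_univ (1/2 : ℝ))
        (by norm_num) hgd
      rw [slope_def_field] at this
      linarith [this, (by ring : (g (1/2) - g 0)/((1/2:ℝ) - 0) = 2*(g (1/2) - g 0))]
    have hg0 : g 0 = H a ^ p := by simp [hg]
    have hg1 : g (1/2) = H ((1/2 : ℝ) • a + (1/2 : ℝ) • b) ^ p := by
      have heq : (1/2 : ℝ) • (b - a) + a = (1/2 : ℝ) • a + (1/2 : ℝ) • b := by module
      rw [hg]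
      simp only []
      rw [heq]
    have hmid := hFmid a b hab
    rw [← hg1] at hmid
    linarith [hslope, hmid, hg0]
  refine ⟨(1 / p) * M + 1, by positivity, c₁ ^ p, Real.rpow_pos_of_pos hc₁ p, fun x hx => ?_⟩
  have hwx := hw x hx
  have hH2 : ∀ ξ : EuclideanSpace ℝ (Fin N),
      c₁ ^ p * w x * ‖ξ‖ ^ p ≤ (inner ℝ (A x ξ) ξ : ℝ) := by
    intro ξ
    by_cases hξ : ξ = 0
    · subst hξ
      simp [hA0 x hx, Real.zero_rpow hp0.ne']
    · rw [hA x hx ξ hξ, real_inner_smul_left, hinner, hEuler ξ hξ]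
      have hb1 : c₁ ^ p * ‖ξ‖ ^ p ≤ H ξ ^ p := by
        rw [← Real.mul_rpow hc₁.le (norm_nonneg ξ)]
        exact Real.rpow_le_rpow (by positivity) (hHbounds ξ).1 hp0.le
      have hcalc : 1 / p * w x * (p * H ξ ^ p) = w x * H ξ ^ p := by
        field_simp
      rw [hcalc]
      nlinarith [hb1, hwx]
  refine ⟨?_, hH2, ?_, ?_⟩
  · -- (H1)
    intro ξ
    by_cases hξ : ξ = 0
    · subst hξ
      simp [hA0 x hx, Real.zero_rpow (by intro h; nlinarith : p - 1 ≠ 0)]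
    · rw [hA x hx ξ hξ, norm_smul, Real.norm_eq_abs, abs_of_pos (by positivity)]
      have h1 := hMb ξ hξ
      have h2 : (0:ℝ) ≤ ‖ξ‖ ^ (p - 1) := by positivity
      have h3 : (0:ℝ) < 1 / p := by positivity
      nlinarith [mul_le_mul_of_nonneg_left h1 (le_of_lt (mul_pos h3 hwx))]
  · -- (H3)
    intro ξ₁ ξ₂ hne
    by_cases h2 : ξ₂ = 0
    · subst h2
      rw [hA0 x hx, sub_zero, sub_zero]
      have := hH2 ξ₁
      have hn : (0:ℝ) < ‖ξ₁‖ := norm_pos_iff.2 hne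
      have : (0:ℝ) < c₁ ^ p * w x * ‖ξ₁‖ ^ p := by
        have := Real.rpow_pos_of_pos hn p
        positivity
      linarith [hH2 ξ₁]
    by_cases h1 : ξ₁ = 0
    · subst h1
      rw [hA0 x hx, zero_sub, zero_sub, inner_neg_neg]
      have hn : (0:ℝ) < ‖ξ₂‖ := norm_pos_iff.2 h2
      have : (0:ℝ) < c₁ ^ p * w x * ‖ξ₂‖ ^ p := by
        have := Real.rpow_pos_of_pos hn p
        positivity
      linarith [hH2 ξ₂]
    · have h12 := hsub ξ₁ ξ₂ h1 hne
      have h21 := hsub ξ₂ ξ₁ h2 (Ne.symm hne)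
      rw [hA x hx ξ₁ h1, hA x hx ξ₂ h2, ← smul_sub, real_inner_smul_left]
      have hpos : (0:ℝ) < 1 / p * w x := by positivity
      refine mul_pos hpos ?_
      rw [inner_sub_left]
      have e1 : (inner ℝ (gradient (fun y => H y ^ p) ξ₁) (ξ₁ - ξ₂) : ℝ)
          = -(inner ℝ (gradient (fun y => H y ^ p) ξ₁) (ξ₂ - ξ₁) : ℝ) := by
        rw [← inner_neg_right, neg_sub]
      rw [e1]
      linarith [h12, h21]
  · -- (H4)
    intro l hl ξ
    by_cases hξ : ξ = 0
    · subst hξ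
      rw [smul_zero, hA0 x hx, smul_zero]
    · rw [hA x hx _ (smul_ne_zero hl hξ), hscale ξ hξ l hl, hA x hx ξ hξ, smul_comm]
end

section
/- Let N ≥ 1 and let ν > −N be a real number. Define the measure μ on ℝ^N by μ(E) = ∫_E ‖x‖^ν dx, i.e., μ is Lebesgue measure with density x ↦ ‖x‖^ν, where ‖·‖ is the Euclidean norm. Then μ is a doubling measure: there exists a constant C > 0 such that μ(B(x, 2r)) ≤ C · μ(B(x, r)) for every x ∈ ℝ^N and every r > 0, where B(x, r) denotes the open Euclidean ball of center x and radius r. -/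
/-! The weight is homogeneous of degree `ν`, so dilation by `c > 0` multiplies `μ` by
`c ^ (N + ν)` and it suffices to compare `μ (B(y, 2))` with `μ (B(y, 1))` uniformly in `y`.
Far from the origin (`‖y‖ ≥ 4`) the weight is within a factor `2 ^ |ν|` of `‖y‖ ^ ν` on
`B(y, 2)`, so the comparison reduces to doubling of Lebesgue measure. Near the origin,
`B(y, 2) ⊆ B(0, 6)`, which has finite measure because `‖x‖ ^ ν` is locally integrable for
`ν > -N`, while `B(y, 1) \ B(0, 1/4)` has Lebesgue measure bounded below and carries weight
at least `5 ^ (-|ν|)`. -/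

open MeasureTheory Metric
open scoped ENNReal NNReal Pointwise
open Module (finrank)

theorem MeasureTheory.withDensity_apply_le_mul_withDensity_apply {α : Type*} [MeasurableSpace α]
    {μ : Measure α} {f g : α → ℝ≥0∞} {s : Set α} (hs : MeasurableSet s) {K : ℝ≥0∞}
    (hK : K ≠ ∞) (hfg : ∀ x ∈ s, f x ≤ K * g x) :
    μ.withDensity f s ≤ K * μ.withDensity g s := by
  rw [withDensity_apply _ hs, withDensity_apply _ hs, ← lintegral_const_mul' _ _ hK]
  exact setLIntegral_mono' hs hfg

theorem MeasureTheory.LocallyIntegrable.isLocallyFiniteMeasure_withDensity_ofReal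
    {X : Type*} [MeasurableSpace X] [TopologicalSpace X] {μ : Measure X} [SFinite μ]
    {f : X → ℝ} (hf : LocallyIntegrable f μ) :
    IsLocallyFiniteMeasure (μ.withDensity fun x ↦ ENNReal.ofReal (f x)) := by
  refine ⟨fun x ↦ ?_⟩
  obtain ⟨U, hU, hfU⟩ := hf x
  exact ⟨U, hU, (withDensity_apply' _ U).trans_lt hfU.setLIntegral_lt_top⟩

theorem Real.rpow_le_rpow_abs_mul_rpow {a t K : ℝ} (ν : ℝ) (ha : 0 < a) (hK : 1 ≤ K)
    (hta : t ≤ K * a) (hat : a ≤ K * t) : t ^ ν ≤ K ^ |ν| * a ^ ν := by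
  have hK0 : 0 < K := zero_lt_one.trans_le hK
  have ht : 0 < t := pos_of_mul_pos_right (ha.trans_le hat) hK0.le
  rcases le_total 0 ν with hν | hν
  · rw [abs_of_nonneg hν, ← Real.mul_rpow hK0.le ha.le]
    exact Real.rpow_le_rpow ht.le hta hν
  · calc t ^ ν ≤ (a / K) ^ ν :=
          Real.rpow_le_rpow_of_nonpos (by positivity) ((div_le_iff₀' hK0).2 hat) hν
      _ = K ^ |ν| * a ^ ν := by
          rw [abs_of_nonpos hν, Real.div_rpow ha.le hK0.le, Real.rpow_neg hK0.le]
          ring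

variable {E : Type*} [NormedAddCommGroup E] [MeasurableSpace E]

noncomputable def powerWeightMeasure (μ : Measure E) (ν : ℝ) : Measure E :=
  μ.withDensity fun y ↦ ENNReal.ofReal (‖y‖ ^ ν)

section AddHaar

variable [BorelSpace E] (μ : Measure E) [μ.IsAddHaarMeasure] (ν : ℝ)

theorem addHaar_ball_sub_le_powerWeightMeasure_ball_of_norm_le_four {y : E} (hy : ‖y‖ ≤ 4) :
    μ (ball 0 1) - μ (ball 0 4⁻¹) ≤
      ENNReal.ofReal (5 ^ |ν|) * powerWeightMeasure μ ν (ball y 1) := by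
  calc μ (ball 0 1) - μ (ball 0 4⁻¹) = μ (ball y 1) - μ (ball 0 4⁻¹) := by
        rw [Measure.addHaar_ball_center μ y]
    _ ≤ μ (ball y 1 \ ball 0 4⁻¹) := le_measure_sdiff
    _ = μ.withDensity 1 (ball y 1 \ ball 0 4⁻¹) := by rw [withDensity_one]
    _ ≤ ENNReal.ofReal (5 ^ |ν|) * powerWeightMeasure μ ν (ball y 1 \ ball 0 4⁻¹) := by
      refine withDensity_apply_le_mul_withDensity_apply
        (measurableSet_ball.diff measurableSet_ball) ENNReal.ofReal_ne_top
        fun u ⟨hu_near, hu_far⟩ ↦ ?_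
      rw [mem_ball, dist_eq_norm] at hu_near
      rw [mem_ball_zero_iff, not_lt] at hu_far
      rw [Pi.one_apply, ← ENNReal.ofReal_mul (by positivity), ← ENNReal.ofReal_one]
      refine ENNReal.ofReal_le_ofReal ?_
      simpa using Real.rpow_le_rpow_abs_mul_rpow (t := 1) (K := 5) ν (a := ‖u‖)
        (by linarith) (by norm_num) (by linarith) (by linarith [norm_sub_norm_le u y])
    _ ≤ ENNReal.ofReal (5 ^ |ν|) * powerWeightMeasure μ ν (ball y 1) := by
      gcongr
      exact Set.sdiff_subset

variable [NormedSpace ℝ E] [FiniteDimensional ℝ E]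

theorem powerWeightMeasure_apply_smul {c : ℝ} (hc : 0 < c) {A : Set E} (hA : MeasurableSet A) :
    powerWeightMeasure μ ν (c • A) =
      ENNReal.ofReal (c ^ (finrank ℝ E + ν)) * powerWeightMeasure μ ν A := by
  have hw (x : E) : ENNReal.ofReal (‖x‖ ^ ν) =
      ENNReal.ofReal (c ^ ν) * ENNReal.ofReal (‖c⁻¹ • x‖ ^ ν) := by
    rw [← ENNReal.ofReal_mul (by positivity), ← Real.mul_rpow hc.le (norm_nonneg _), norm_smul,
      Real.norm_of_nonneg (inv_nonneg.2 hc.le), mul_inv_cancel_left₀ hc.ne']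
  rw [powerWeightMeasure, withDensity_apply _ (hA.const_smul₀ c), withDensity_apply _ hA,
    ← Set.preimage_smul_inv₀ hc.ne', lintegral_congr hw,
    lintegral_const_mul' _ _ ENNReal.ofReal_ne_top,
    ← setLIntegral_map hA (measurable_norm.pow_const ν).ennreal_ofReal (measurable_const_smul _),
    Measure.map_addHaar_smul μ (inv_ne_zero hc.ne'), Measure.restrict_smul,
    lintegral_smul_measure, smul_eq_mul, ← mul_assoc, ← ENNReal.ofReal_mul (by positivity),
    inv_pow, inv_inv, abs_of_pos (by positivity), Real.rpow_add hc, Real.rpow_natCast,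
    mul_comm (c ^ ν)]

theorem powerWeightMeasure_ball_two_mul_le {C : ℝ≥0∞}
    (hC : ∀ y : E, powerWeightMeasure μ ν (ball y 2) ≤ C * powerWeightMeasure μ ν (ball y 1))
    (x : E) {r : ℝ} (hr : 0 < r) :
    powerWeightMeasure μ ν (ball x (2 * r)) ≤ C * powerWeightMeasure μ ν (ball x r) := by
  have hball (s : ℝ) : ball x (s * r) = r • ball (r⁻¹ • x) s := by
    rw [_root_.smul_ball hr.ne', smul_inv_smul₀ hr.ne', Real.norm_of_nonneg hr.le, mul_comm]
  rw [hball, ← one_mul r, hball, one_mul, powerWeightMeasure_apply_smul μ ν hr measurableSet_ball,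
    powerWeightMeasure_apply_smul μ ν hr measurableSet_ball, mul_left_comm]
  gcongr
  exact hC _

theorem isLocallyFiniteMeasure_powerWeightMeasure (hd : 1 ≤ finrank ℝ E)
    (hν : -(finrank ℝ E : ℝ) < ν) : IsLocallyFiniteMeasure (powerWeightMeasure μ ν) := by
  refine LocallyIntegrable.isLocallyFiniteMeasure_withDensity_ofReal
    (locallyIntegrable_of_norm_le_rpow (C := 1) (α := -ν) hd (by linarith) ?_ ?_)
  · refine Filter.Eventually.of_forall fun x ↦ ?_
    rw [neg_neg, one_mul, Real.norm_of_nonneg (by positivity)]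
  · exact (measurable_norm.pow_const ν).aestronglyMeasurable

theorem powerWeightMeasure_ball_two_le_of_four_le_norm {y : E} (hy : 4 ≤ ‖y‖) :
    powerWeightMeasure μ ν (ball y 2) ≤
      ENNReal.ofReal (2 ^ finrank ℝ E * 4 ^ |ν|) * powerWeightMeasure μ ν (ball y 1) := by
  have hy0 : 0 < ‖y‖ := by linarith
  have hcomparable : ∀ u ∈ ball y 2, ‖u‖ ≤ 2 * ‖y‖ ∧ ‖y‖ ≤ 2 * ‖u‖ := by
    intro u hu
    rw [mem_ball, dist_eq_norm] at hu
    constructor <;> linarith [norm_sub_norm_le u y, norm_sub_norm_le y u, norm_sub_rev u y]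
  set K := ENNReal.ofReal (2 ^ |ν|)
  set a := ENNReal.ofReal (‖y‖ ^ ν)
  have hupper :
      powerWeightMeasure μ ν (ball y 2) ≤ K * μ.withDensity (fun _ ↦ a) (ball y 2) := by
    refine withDensity_apply_le_mul_withDensity_apply measurableSet_ball ENNReal.ofReal_ne_top
      fun u hu ↦ ?_
    rw [← ENNReal.ofReal_mul (by positivity)]
    exact ENNReal.ofReal_le_ofReal
      (Real.rpow_le_rpow_abs_mul_rpow ν hy0 one_le_two (hcomparable u hu).1 (hcomparable u hu).2)
  have hlower :
      μ.withDensity (fun _ ↦ a) (ball y 1) ≤ K * powerWeightMeasure μ ν (ball y 1) := by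
    refine withDensity_apply_le_mul_withDensity_apply measurableSet_ball ENNReal.ofReal_ne_top
      fun u hu ↦ ?_
    have hu := hcomparable u (ball_subset_ball one_le_two hu)
    rw [← ENNReal.ofReal_mul (by positivity)]
    exact ENNReal.ofReal_le_ofReal
      (Real.rpow_le_rpow_abs_mul_rpow ν (by linarith) one_le_two hu.2 hu.1)
  calc powerWeightMeasure μ ν (ball y 2) ≤ K * μ.withDensity (fun _ ↦ a) (ball y 2) := hupper
    _ = K * ENNReal.ofReal (2 ^ finrank ℝ E) * μ.withDensity (fun _ ↦ a) (ball y 1) := by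
      simp only [withDensity_const, Measure.smul_apply, smul_eq_mul,
        Measure.addHaar_ball_of_pos μ y two_pos, Measure.addHaar_ball_of_pos μ y one_pos, one_pow,
        ENNReal.ofReal_one, one_mul]
      ring
    _ ≤ K * ENNReal.ofReal (2 ^ finrank ℝ E) * (K * powerWeightMeasure μ ν (ball y 1)) := by
      gcongr
    _ = ENNReal.ofReal (2 ^ finrank ℝ E * 4 ^ |ν|) * powerWeightMeasure μ ν (ball y 1) := by
      rw [show (4 : ℝ) = 2 * 2 by norm_num, Real.mul_rpow zero_le_two zero_le_two,
        ENNReal.ofReal_mul (by positivity), ENNReal.ofReal_mul (by positivity)]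
      ring

theorem exists_powerWeightMeasure_ball_two_le_of_norm_le_four (hd : 1 ≤ finrank ℝ E)
    (hν : -(finrank ℝ E : ℝ) < ν) :
    ∃ C : ℝ≥0∞, C ≠ ∞ ∧ ∀ y : E, ‖y‖ ≤ 4 →
      powerWeightMeasure μ ν (ball y 2) ≤ C * powerWeightMeasure μ ν (ball y 1) := by
  have := isLocallyFiniteMeasure_powerWeightMeasure μ ν hd hν
  set m := μ (ball (0 : E) 1) - μ (ball 0 4⁻¹)
  have hm0 : m ≠ 0 := by
    refine (tsub_pos_iff_lt.2 ?_).ne'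
    conv_rhs => rw [← one_mul (μ (ball 0 1))]
    rw [Measure.addHaar_ball_of_pos μ 0 (by norm_num),
      ENNReal.mul_lt_mul_iff_left (measure_ball_pos μ 0 one_pos).ne' measure_ball_lt_top.ne,
      ENNReal.ofReal_lt_one]
    exact pow_lt_one₀ (by norm_num) (by norm_num) (by omega)
  have hm_top : m ≠ ∞ := ne_top_of_le_ne_top measure_ball_lt_top.ne tsub_le_self
  refine ⟨powerWeightMeasure μ ν (ball 0 6) / m * ENNReal.ofReal (5 ^ |ν|),
    ENNReal.mul_ne_top (ENNReal.div_ne_top measure_ball_lt_top.ne hm0) ENNReal.ofReal_ne_top,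
    fun y hy ↦ ?_⟩
  calc powerWeightMeasure μ ν (ball y 2) ≤ powerWeightMeasure μ ν (ball 0 6) :=
        measure_mono (ball_subset_ball' (by rw [dist_zero_right]; linarith))
    _ = powerWeightMeasure μ ν (ball 0 6) / m * m := (ENNReal.div_mul_cancel hm0 hm_top).symm
    _ ≤ powerWeightMeasure μ ν (ball 0 6) / m *
        (ENNReal.ofReal (5 ^ |ν|) * powerWeightMeasure μ ν (ball y 1)) := by
      gcongr
      exact addHaar_ball_sub_le_powerWeightMeasure_ball_of_norm_le_four μ ν hy
    _ = _ := by ring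

theorem exists_powerWeightMeasure_ball_two_le (hd : 1 ≤ finrank ℝ E)
    (hν : -(finrank ℝ E : ℝ) < ν) :
    ∃ C : ℝ≥0, ∀ y : E,
      powerWeightMeasure μ ν (ball y 2) ≤ C * powerWeightMeasure μ ν (ball y 1) := by
  obtain ⟨C, hC, hnear⟩ := exists_powerWeightMeasure_ball_two_le_of_norm_le_four μ ν hd hν
  refine ⟨C.toNNReal ⊔ (2 ^ finrank ℝ E * 4 ^ |ν| : ℝ).toNNReal, fun y ↦ ?_⟩
  rw [ENNReal.coe_max, ENNReal.coe_toNNReal hC]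
  rcases le_total ‖y‖ 4 with hy | hy
  · exact (hnear y hy).trans (by gcongr; exact le_max_left _ _)
  · exact (powerWeightMeasure_ball_two_le_of_four_le_norm μ ν hy).trans
      (by gcongr; exact le_max_right _ _)

end AddHaar

/-- For `ν > -N`, the measure `dμ = ‖x‖^ν dx` on `ℝ^N` is doubling. -/
theorem power_weight_doubling
    (N : ℕ) (hN : 1 ≤ N) (ν : ℝ) (hν : -(N : ℝ) < ν) :
    ∃ C : NNReal, 0 < C ∧
      ∀ (x : EuclideanSpace ℝ (Fin N)) (r : ℝ), 0 < r →
        (volume.withDensity fun y : EuclideanSpace ℝ (Fin N) => ENNReal.ofReal (‖y‖ ^ ν))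
            (ball x (2 * r)) ≤
          C * (volume.withDensity fun y : EuclideanSpace ℝ (Fin N) =>
            ENNReal.ofReal (‖y‖ ^ ν)) (ball x r) := by
  obtain ⟨C, hC⟩ := exists_powerWeightMeasure_ball_two_le
    (volume : Measure (EuclideanSpace ℝ (Fin N))) ν
    (by rwa [finrank_euclideanSpace_fin]) (by rwa [finrank_euclideanSpace_fin])
  refine ⟨C + 1, by positivity, fun x r hr ↦ ?_⟩
  calc _ ≤ (C : ℝ≥0∞) * _ := powerWeightMeasure_ball_two_mul_le volume ν hC x hr
    _ ≤ _ := mul_le_mul_left (by exact_mod_cast le_self_add) _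
end
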